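/- arXiv:1602.07195 — 4 statements merged into one kernel-verified Lean document; each statement's English description precedes it below -/
import Mathlib

section
/- Let β > 1 and α ∈ (0,1). There exists a constant C > 0 (depending only on β and α) such that for all natural numbers n, m ≥ 1 and k ≥ 2 with mk ≤ αn, the ratio of Zipf tail sums satisfies (Σ_{i=k}^{n} i^{−β}) / (Σ_{i=mk+1}^{n} i^{−β}) ≤ C · m^{β−1}. -/
/-!
Compare both sums with `∫ x^{-β} = (a^{1-β} - b^{1-β})/(β - 1)`. The numerator is at most
`β/(β-1) · k^{1-β}`. Since `n + 1 ≥ r (mk + 1)` for a fixed `r = r(α) > 1`, the far end of the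
denominator's integral loses only a factor `1 - r^{1-β}`, so the denominator is at least a constant
times `(mk + 1)^{1-β} ≥ (2mk)^{1-β}`. The factors `k^{1-β}` cancel and `m^{β-1}` remains.
-/

open Finset Real

namespace AntitoneOn

variable {f : ℝ → ℝ} {a b : ℕ}

theorem sum_Icc_le_add_integral (hab : a ≤ b) (hf : AntitoneOn f (Set.Icc a b)) :
    ∑ i ∈ Icc a b, f i ≤ f a + ∫ x in (a : ℝ)..b, f x := by
  have htail := hf.sum_le_integral_Ico hab
  rw [sum_Ico_add' (fun i : ℕ => f i) a b 1, Ico_add_one_add_one_eq_Ioc] at htail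
  rw [← add_sum_Ioc_eq_sum_Icc hab]
  exact add_le_add_right htail _

theorem integral_le_sum_Icc (hab : a ≤ b + 1) (hf : AntitoneOn f (Set.Icc a (b + 1 : ℕ))) :
    ∫ x in (a : ℝ)..(b + 1 : ℕ), f x ≤ ∑ i ∈ Icc a b, f i := by
  simpa only [Ico_add_one_right_eq_Icc] using hf.integral_le_sum_Ico hab

end AntitoneOn

lemma div_mul_add_one_le_add_one {α M n : ℝ} (hα0 : 0 < α) (hα1 : α ≤ 1) (hM : 1 ≤ M)
    (hMn : M ≤ α * n) : (1 + α) / (2 * α) * (M + 1) ≤ n + 1 := by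
  rw [div_mul_eq_mul_div, div_le_iff₀ (by positivity)]
  nlinarith

section ZipfTail

variable {β : ℝ}

lemma antitoneOn_rpow_neg_Icc (hβ : 0 ≤ β) {a : ℝ} (ha : 0 < a) (b : ℝ) :
    AntitoneOn (fun x : ℝ => x ^ (-β)) (Set.Icc a b) :=
  (antitoneOn_rpow_Ioi_of_exponent_nonpos (neg_nonpos.2 hβ)).mono
    fun _ hx => lt_of_lt_of_le ha hx.1

lemma integral_rpow_neg_of_one_lt (hβ : 1 < β) {a b : ℝ} (ha : 0 < a) (hab : a ≤ b) :
    ∫ x in a..b, x ^ (-β) = (a ^ (1 - β) - b ^ (1 - β)) / (β - 1) := by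
  rw [integral_rpow (Or.inr ⟨by linarith, Set.notMem_uIcc_of_lt ha (ha.trans_le hab)⟩),
    neg_add_eq_sub, div_eq_div_iff (by linarith) (by linarith)]
  ring

theorem sum_Icc_rpow_neg_le (hβ : 1 < β) {k : ℕ} (hk : 1 ≤ k) (n : ℕ) :
    ∑ i ∈ Icc k n, (i : ℝ) ^ (-β) ≤ β / (β - 1) * (k : ℝ) ^ (1 - β) := by
  have hβ1 : 0 < β - 1 := by linarith
  have hk0 : (0 : ℝ) < k := by exact_mod_cast hk
  rcases lt_or_ge n k with hnk | hkn
  · rw [Icc_eq_empty_of_lt hnk, sum_empty]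
    positivity
  have hkn' : (k : ℝ) ≤ n := by exact_mod_cast hkn
  calc ∑ i ∈ Icc k n, (i : ℝ) ^ (-β)
      ≤ (k : ℝ) ^ (-β) + ∫ x in (k : ℝ)..n, x ^ (-β) :=
        (antitoneOn_rpow_neg_Icc (by linarith) hk0 _).sum_Icc_le_add_integral hkn
    _ = (k : ℝ) ^ (-β) + ((k : ℝ) ^ (1 - β) - (n : ℝ) ^ (1 - β)) / (β - 1) := by
        rw [integral_rpow_neg_of_one_lt hβ hk0 hkn']
    _ ≤ (k : ℝ) ^ (1 - β) + (k : ℝ) ^ (1 - β) / (β - 1) := by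
        refine add_le_add ?_ (div_le_div_of_nonneg_right ?_ hβ1.le)
        · exact rpow_le_rpow_of_exponent_le (by exact_mod_cast hk) (by linarith)
        · exact sub_le_self _ (by positivity)
    _ = β / (β - 1) * (k : ℝ) ^ (1 - β) := by
        field_simp
        ring

theorem le_sum_Icc_rpow_neg (hβ : 1 < β) {a b : ℕ} (ha : 1 ≤ a) {r : ℝ} (hr : 1 ≤ r)
    (hrab : r * a ≤ b + 1) :
    (1 - r ^ (1 - β)) / (β - 1) * (a : ℝ) ^ (1 - β) ≤ ∑ i ∈ Icc a b, (i : ℝ) ^ (-β) := by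
  have ha0 : (0 : ℝ) < a := by exact_mod_cast ha
  have hab : (a : ℝ) ≤ (b + 1 : ℕ) := by push_cast; nlinarith
  have hfar : ((b + 1 : ℕ) : ℝ) ^ (1 - β) ≤ r ^ (1 - β) * (a : ℝ) ^ (1 - β) := by
    rw [← mul_rpow (by linarith) ha0.le]
    exact rpow_le_rpow_of_nonpos (by positivity) (by push_cast; exact hrab) (by linarith)
  calc (1 - r ^ (1 - β)) / (β - 1) * (a : ℝ) ^ (1 - β)
      ≤ ((a : ℝ) ^ (1 - β) - ((b + 1 : ℕ) : ℝ) ^ (1 - β)) / (β - 1) := by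
        rw [div_mul_eq_mul_div]
        gcongr
        linarith
    _ = ∫ x in (a : ℝ)..(b + 1 : ℕ), x ^ (-β) := (integral_rpow_neg_of_one_lt hβ ha0 hab).symm
    _ ≤ ∑ i ∈ Icc a b, (i : ℝ) ^ (-β) :=
        (antitoneOn_rpow_neg_Icc (by linarith) ha0 _).integral_le_sum_Icc (by exact_mod_cast hab)

end ZipfTail

/-- Zipf tail-sum ratio bound for `β > 1`: there is a constant `C > 0` depending only on
`β` and `α` such that for all `n`, `m ≥ 1`, `k ≥ 2` with `mk ≤ αn`,
`(∑_{i=k}^n i^{−β}) / (∑_{i=mk+1}^n i^{−β}) ≤ C · m^{β−1}`. -/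
theorem zipf_ratio_beta_gt_one (β α : ℝ) (hβ : 1 < β) (hα0 : 0 < α) (hα1 : α < 1) :
    ∃ C : ℝ, 0 < C ∧ ∀ n m k : ℕ, 1 ≤ m → 2 ≤ k → (m : ℝ) * k ≤ α * n →
      (∑ i ∈ Finset.Icc k n, (i : ℝ) ^ (-β)) /
          (∑ i ∈ Finset.Icc (m * k + 1) n, (i : ℝ) ^ (-β)) ≤
        C * (m : ℝ) ^ (β - 1) := by
  have hβ1 : 0 < β - 1 := sub_pos.2 hβ
  set r := (1 + α) / (2 * α)
  have hr : 1 < r := by rw [lt_div_iff₀ (by positivity)]; linarith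
  have hgap : 0 < 1 - r ^ (1 - β) := sub_pos.2 (rpow_lt_one_of_one_lt_of_neg hr (by linarith))
  refine ⟨β * 2 ^ (β - 1) / (1 - r ^ (1 - β)), by positivity, fun n m k hm hk hmk => ?_⟩
  have hm0 : (0 : ℝ) < m := by exact_mod_cast hm
  have hk0 : (0 : ℝ) < k := by positivity
  have hM : (1 : ℝ) ≤ m * k := by exact_mod_cast Nat.mul_pos hm (by omega : 0 < k)
  have hfar : r * ((m * k + 1 : ℕ) : ℝ) ≤ n + 1 := by
    push_cast
    exact div_mul_add_one_le_add_one hα0 hα1.le hM hmk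
  have hden : (1 - r ^ (1 - β)) / (β - 1) * (2 * m * k : ℝ) ^ (1 - β) ≤
      ∑ i ∈ Icc (m * k + 1) n, (i : ℝ) ^ (-β) := by
    refine le_trans ?_ (le_sum_Icc_rpow_neg hβ (by omega) hr.le hfar)
    refine mul_le_mul_of_nonneg_left (rpow_le_rpow_of_nonpos (by positivity) ?_ (by linarith))
      (div_nonneg hgap.le hβ1.le)
    push_cast
    linarith
  calc (∑ i ∈ Icc k n, (i : ℝ) ^ (-β)) / ∑ i ∈ Icc (m * k + 1) n, (i : ℝ) ^ (-β)
      ≤ β / (β - 1) * (k : ℝ) ^ (1 - β) /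
          ((1 - r ^ (1 - β)) / (β - 1) * (2 * m * k : ℝ) ^ (1 - β)) :=
        div_le_div₀ (by positivity) (sum_Icc_rpow_neg_le hβ (by omega) n)
          (by positivity) hden
    _ = β * 2 ^ (β - 1) / (1 - r ^ (1 - β)) * (m : ℝ) ^ (β - 1) := by
        rw [mul_rpow (by positivity) hk0.le, mul_rpow zero_le_two hm0.le,
          show 1 - β = -(β - 1) by ring, rpow_neg zero_le_two, rpow_neg hm0.le, rpow_neg hk0.le]
        field_simp
end

section
/- Let β > 1. There exist c > 0, K and N₀ such that the following holds for all k ≥ K and all n ≥ N₀ with ⌊k/(log log k)^{1/β}⌋ + 1 ≤ n. Let p be the Zipf(β, n) probability mass function on {1,…,n} (p_i = i^{−β}/Σ_{j=1}^n j^{−β}), let N = ⌊k^{β}/log log k⌋, let ℓ = ⌊k/(log log k)^{1/β}⌋ + 1, and let X_1, …, X_N be i.i.d. random variables each with law p (i.e., consider the N-fold product of the measure induced by p). Then the probability that the number of indices t ∈ {1,…,N} with X_t ≥ ℓ exceeds (2/0.9) · k/(log log k)^{1/β} is at most exp(−c · k/(log log k)^{1/β}). -/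
/-!
Write `m = k / (log log k)^{1/β}`, so that `N ≤ m^β` and `ℓ = ⌊m⌋ + 1`. Comparing the sums
`∑ i^{-β}` with `∫ x^{-β} dx` (through the tangent lines of the convex function `x^{1-β}`)
bounds the Zipf mass of `{ℓ, …, n}` by `(m - 1)^{1-β} / (1 - m^{1-β}) ~ m^{1-β}`, so the
expected number of unpopular requests is at most `(3/2) m` for large `m`. The multiplicative
Chernoff bound `P(count ≥ a) ≤ exp (N q (e^θ - 1) - θ a)` for a sum of `N` i.i.d. indicators of
mean `q`, taken with `θ = 1/2` and `a = (20/9) m`, then gives `exp (-m/10)`.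
-/

open MeasureTheory

/-- The Zipf(β, n) probability of content `i`: `i^{−β}/∑_{j=1}^n j^{−β}` for
`i ∈ {1,…,n}` and `0` otherwise. -/
noncomputable def zipfP (β : ℝ) (n : ℕ) (i : ℕ) : ℝ :=
  if i ∈ Finset.Icc 1 n then
    (i : ℝ) ^ (-β) / (∑ j ∈ Finset.Icc 1 n, (j : ℝ) ^ (-β)) else 0

/-- The measure on `ℕ` induced by the Zipf(β, n) probability mass function. -/
noncomputable def zipfMeasure (β : ℝ) (n : ℕ) : Measure ℕ :=
  Measure.sum fun i => ENNReal.ofReal (zipfP β n i) • Measure.dirac i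

open Real Finset Filter Topology ProbabilityTheory

lemma one_add_mul_sub_one_le_rpow_of_nonpos {p t : ℝ} (hp : p ≤ 0) (ht : 0 < t) :
    1 + p * (t - 1) ≤ t ^ p := by
  have hB := one_add_mul_self_le_rpow_one_add (s := t⁻¹ - 1)
    (by linarith [inv_pos.2 ht]) (p := 1 - p) (by linarith)
  rw [add_sub_cancel, inv_rpow ht.le, ← rpow_neg ht.le, neg_sub] at hB
  have h := mul_le_mul_of_nonneg_left hB ht.le
  rw [mul_add, mul_one, mul_left_comm, mul_sub, mul_inv_cancel₀ ht.ne', mul_one,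
    rpow_sub_one ht.ne', mul_div_cancel₀ _ ht.ne'] at h
  linarith

lemma rpow_add_mul_rpow_sub_one_mul_sub_le_rpow {p x y : ℝ} (hp : p ≤ 0) (hx : 0 < x)
    (hy : 0 < y) : x ^ p + p * x ^ (p - 1) * (y - x) ≤ y ^ p := by
  have h := mul_le_mul_of_nonneg_left (one_add_mul_sub_one_le_rpow_of_nonpos hp (div_pos hy hx))
    (rpow_nonneg hx.le p)
  rw [div_rpow hy.le hx.le, mul_div_cancel₀ _ (rpow_pos_of_pos hx p).ne'] at h
  calc x ^ p + p * x ^ (p - 1) * (y - x) = x ^ p * (1 + p * (y / x - 1)) := by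
        rw [rpow_sub_one hx.ne']; field_simp
    _ ≤ y ^ p := h

lemma mul_sum_Icc_rpow_neg_le {β : ℝ} (hβ : 1 ≤ β) {l : ℕ} (hl : 2 ≤ l) (n : ℕ) :
    (β - 1) * ∑ i ∈ Icc l n, (i : ℝ) ^ (-β) ≤ ((l : ℝ) - 1) ^ (1 - β) := by
  have hl1 : (0 : ℝ) ≤ (l : ℝ) - 1 := by
    have : (2 : ℝ) ≤ l := by exact_mod_cast hl
    linarith
  rcases lt_or_ge n l with hnl | hln
  · rw [Icc_eq_empty_of_lt hnl, sum_empty, mul_zero]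
    exact rpow_nonneg hl1 _
  have hterm : ∀ i ∈ Ico l (n + 1),
      (β - 1) * (i : ℝ) ^ (-β) ≤ ((i : ℝ) - 1) ^ (1 - β) - (i : ℝ) ^ (1 - β) := by
    intro i hi
    have hi2 : (2 : ℝ) ≤ i := by exact_mod_cast hl.trans (mem_Ico.1 hi).1
    have := rpow_add_mul_rpow_sub_one_mul_sub_le_rpow (p := 1 - β) (x := i) (y := i - 1)
      (by linarith) (by linarith) (by linarith)
    rw [show 1 - β - 1 = -β by ring] at this
    linarith
  calc (β - 1) * ∑ i ∈ Icc l n, (i : ℝ) ^ (-β)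
      = ∑ i ∈ Ico l (n + 1), (β - 1) * (i : ℝ) ^ (-β) := by
        rw [mul_sum, Ico_add_one_right_eq_Icc]
    _ ≤ ∑ i ∈ Ico l (n + 1), (((i : ℝ) - 1) ^ (1 - β) - (i : ℝ) ^ (1 - β)) := sum_le_sum hterm
    _ = ((l : ℝ) - 1) ^ (1 - β) - (n : ℝ) ^ (1 - β) := by
        have := sum_Ico_sub (fun i : ℕ => -((i : ℝ) - 1) ^ (1 - β)) (by omega : l ≤ n + 1)
        push_cast at this
        simp only [add_sub_cancel_right, neg_sub_neg] at this
        rw [this]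
    _ ≤ ((l : ℝ) - 1) ^ (1 - β) := by linarith [rpow_nonneg n.cast_nonneg (1 - β)]

lemma one_sub_rpow_le_mul_sum_Icc_rpow_neg {β : ℝ} (hβ : 1 ≤ β) (n : ℕ) :
    1 - ((n : ℝ) + 1) ^ (1 - β) ≤ (β - 1) * ∑ j ∈ Icc 1 n, (j : ℝ) ^ (-β) := by
  have hterm : ∀ j ∈ Ico 1 (n + 1),
      (j : ℝ) ^ (1 - β) - ((j : ℝ) + 1) ^ (1 - β) ≤ (β - 1) * (j : ℝ) ^ (-β) := by
    intro j hj
    have hj1 : (1 : ℝ) ≤ j := by exact_mod_cast (mem_Ico.1 hj).1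
    have := rpow_add_mul_rpow_sub_one_mul_sub_le_rpow (p := 1 - β) (x := j) (y := j + 1)
      (by linarith) (by linarith) (by linarith)
    rw [show 1 - β - 1 = -β by ring] at this
    linarith
  calc 1 - ((n : ℝ) + 1) ^ (1 - β)
      = ∑ j ∈ Ico 1 (n + 1), ((j : ℝ) ^ (1 - β) - ((j : ℝ) + 1) ^ (1 - β)) := by
        have := sum_Ico_sub (fun j : ℕ => -(j : ℝ) ^ (1 - β)) (by omega : 1 ≤ n + 1)
        push_cast at this
        simp only [neg_sub_neg, one_rpow] at this
        rw [this]
    _ ≤ ∑ j ∈ Ico 1 (n + 1), (β - 1) * (j : ℝ) ^ (-β) := sum_le_sum hterm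
    _ = (β - 1) * ∑ j ∈ Icc 1 n, (j : ℝ) ^ (-β) := by rw [mul_sum, Ico_add_one_right_eq_Icc]

lemma zipfP_nonneg (β : ℝ) (n i : ℕ) : 0 ≤ zipfP β n i := by
  unfold zipfP
  split_ifs
  · exact div_nonneg (by positivity) (sum_nonneg fun j _ => by positivity)
  · exact le_rfl

lemma sum_Icc_zipfP (β : ℝ) {l : ℕ} (n : ℕ) (hl : 1 ≤ l) :
    ∑ i ∈ Icc l n, zipfP β n i =
      (∑ i ∈ Icc l n, (i : ℝ) ^ (-β)) / ∑ j ∈ Icc 1 n, (j : ℝ) ^ (-β) := by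
  rw [sum_div]
  refine sum_congr rfl fun i hi => if_pos ?_
  rw [mem_Icc] at hi ⊢
  omega

lemma zipfMeasure_apply (β : ℝ) (n : ℕ) (s : Set ℕ) :
    zipfMeasure β n s = ENNReal.ofReal (∑ i ∈ Icc 1 n, s.indicator (zipfP β n) i) := by
  have hzero : ∀ i ∉ Icc 1 n, zipfP β n i = 0 := fun i hi => if_neg hi
  rw [zipfMeasure, Measure.sum_apply _ (.of_discrete), ENNReal.ofReal_sum_of_nonneg
    fun i _ => Set.indicator_nonneg (fun j _ => zipfP_nonneg β n j) i]
  refine (tsum_eq_sum fun i hi => ?_).trans (sum_congr rfl fun i _ => ?_)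
  · simp [hzero i hi]
  · by_cases his : i ∈ s <;> simp [his]

lemma zipfMeasure_real_apply (β : ℝ) (n : ℕ) (s : Set ℕ) :
    (zipfMeasure β n).real s = ∑ i ∈ Icc 1 n, s.indicator (zipfP β n) i := by
  rw [measureReal_def, zipfMeasure_apply, ENNReal.toReal_ofReal
    (sum_nonneg fun i _ => Set.indicator_nonneg (fun j _ => zipfP_nonneg β n j) i)]

lemma isProbabilityMeasure_zipfMeasure (β : ℝ) {n : ℕ} (hn : 1 ≤ n) :
    IsProbabilityMeasure (zipfMeasure β n) := by
  have hZ : 0 < ∑ j ∈ Icc 1 n, (j : ℝ) ^ (-β) :=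
    sum_pos' (fun j _ => by positivity) ⟨1, mem_Icc.2 ⟨le_rfl, hn⟩, by simp⟩
  constructor
  rw [zipfMeasure_apply, Set.indicator_univ, sum_Icc_zipfP β n le_rfl, div_self hZ.ne',
    ENNReal.ofReal_one]

lemma zipfMeasure_real_setOf_le (β : ℝ) {l : ℕ} (n : ℕ) (hl : 1 ≤ l) :
    (zipfMeasure β n).real {i | l ≤ i} = ∑ i ∈ Icc l n, zipfP β n i := by
  classical
  rw [zipfMeasure_real_apply, sum_indicator_eq_sum_filter]
  congr 1
  ext i
  simp only [mem_filter, mem_Icc, Set.mem_ofPred_eq]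
  omega

lemma zipfMeasure_real_setOf_le_le {β : ℝ} (hβ : 1 < β) {l n : ℕ} (hl : 2 ≤ l) (hln : l ≤ n) :
    (zipfMeasure β n).real {i | l ≤ i} ≤
      ((l : ℝ) - 1) ^ (1 - β) / (1 - ((n : ℝ) + 1) ^ (1 - β)) := by
  have hβ1 : 0 < β - 1 := by linarith
  have hn : (1 : ℝ) < n + 1 := by
    have : (1 : ℝ) ≤ n := by exact_mod_cast (by omega : 1 ≤ n)
    linarith
  have hden : 0 < 1 - ((n : ℝ) + 1) ^ (1 - β) :=
    sub_pos.2 (rpow_lt_one_of_one_lt_of_neg hn (by linarith))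
  rw [zipfMeasure_real_setOf_le β n (by omega), sum_Icc_zipfP β n (by omega),
    ← mul_div_mul_left _ _ hβ1.ne']
  have hl1 : (0 : ℝ) ≤ l - 1 := by
    have : (2 : ℝ) ≤ l := by exact_mod_cast hl
    linarith
  exact div_le_div₀ (rpow_nonneg hl1 _)
    (mul_sum_Icc_rpow_neg_le hβ.le hl n) hden (one_sub_rpow_le_mul_sum_Icc_rpow_neg hβ.le n)

section Chernoff

variable {α ι : Type*} [MeasurableSpace α] [Fintype ι]

lemma mgf_sum_comp_eval_pi (μ : Measure α) [SigmaFinite μ] (X : α → ℝ) (t : ℝ) :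
    mgf (fun x : ι → α => ∑ i, X (x i)) (Measure.pi fun _ => μ) t =
      mgf X μ t ^ Fintype.card ι := by
  simp only [mgf, mul_sum, exp_sum]
  exact integral_fintype_prod_eq_pow fun a => exp (t * X a)

lemma mgf_indicator_one (μ : Measure α) [IsProbabilityMeasure μ] {S : Set α}
    (hS : MeasurableSet S) (t : ℝ) :
    mgf (S.indicator 1) μ t = 1 + μ.real S * (exp t - 1) := by
  have hpt : (fun a => exp (t * S.indicator 1 a)) =
      fun a => 1 + S.indicator (fun _ => exp t - 1) a := by
    ext a
    by_cases ha : a ∈ S <;> simp [ha]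
  rw [mgf, hpt, integral_add (integrable_const _) ((integrable_const _).indicator hS),
    integral_indicator_const _ hS, integral_const, probReal_univ, one_smul, smul_eq_mul]

theorem measure_pi_card_filter_ge_le_exp (μ : Measure α) [IsProbabilityMeasure μ]
    {P : α → Prop} [DecidablePred P] (hP : MeasurableSet {a | P a}) {θ : ℝ} (hθ : 0 ≤ θ)
    (a : ℝ) :
    Measure.pi (fun _ : ι => μ) {x | a ≤ (#{t | P (x t)} : ℝ)} ≤
      ENNReal.ofReal (exp (Fintype.card ι * μ.real {a | P a} * (exp θ - 1) - θ * a)) := by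
  set S := {a | P a}
  have hcount : ∀ x : ι → α, (#{t | P (x t)} : ℝ) = ∑ t, S.indicator 1 (x t) := fun x => by
    rw [natCast_card_filter]
    exact sum_congr rfl fun t _ => by simp [Set.indicator_apply, S]
  have hX : Measurable fun x : ι → α => ∑ t, S.indicator (1 : α → ℝ) (x t) :=
    Finset.measurable_sum _ fun t _ => (measurable_one.indicator hP).comp (measurable_pi_apply t)
  have hX_le : ∀ x : ι → α, ∑ t, S.indicator (1 : α → ℝ) (x t) ≤ Fintype.card ι := fun x =>
    calc ∑ t, S.indicator (1 : α → ℝ) (x t) ≤ ∑ _t : ι, (1 : ℝ) :=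
          sum_le_sum fun t _ => Set.indicator_le_self' (fun _ _ => zero_le_one) _
      _ = Fintype.card ι := by simp
  have hint := integrable_exp_mul_of_le (μ := Measure.pi fun _ : ι => μ) θ (Fintype.card ι) hθ
    hX.aemeasurable (ae_of_all _ hX_le)
  simp_rw [hcount]
  rw [← ofReal_measureReal]
  refine ENNReal.ofReal_le_ofReal ((measure_ge_le_exp_mul_mgf a hθ hint).trans ?_)
  rw [mgf_sum_comp_eval_pi, mgf_indicator_one μ hP]
  calc exp (-θ * a) * (1 + μ.real S * (exp θ - 1)) ^ Fintype.card ι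
      ≤ exp (-θ * a) * exp (μ.real S * (exp θ - 1)) ^ Fintype.card ι := by
        gcongr
        · have := one_le_exp hθ
          positivity
        · linarith [add_one_le_exp (μ.real S * (exp θ - 1))]
    _ = exp (Fintype.card ι * μ.real S * (exp θ - 1) - θ * a) := by
        rw [← exp_nat_mul, ← exp_add]
        ring_nf

end Chernoff

lemma tendsto_one_sub_inv_rpow_div_one_sub_rpow {β : ℝ} (hβ : 1 < β) :
    Tendsto (fun m : ℝ => (1 - m⁻¹) ^ (1 - β) / (1 - m ^ (1 - β))) atTop (𝓝 1) := by
  have hnum : Tendsto (fun m : ℝ => (1 - m⁻¹) ^ (1 - β)) atTop (𝓝 1) := by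
    simpa using (tendsto_inv_atTop_zero.const_sub 1).rpow_const (p := 1 - β) (Or.inl (by norm_num))
  have hden : Tendsto (fun m : ℝ => 1 - m ^ (1 - β)) atTop (𝓝 1) := by
    simpa [neg_sub] using (tendsto_rpow_neg_atTop (by linarith : 0 < β - 1)).const_sub 1
  simpa [Pi.div_def] using hnum.div hden one_ne_zero

lemma eventually_zipfMeasure_real_tail_le_mul_rpow {β C : ℝ} (hβ : 1 < β) (hC : 1 < C) :
    ∀ᶠ m : ℝ in atTop, ∀ n : ℕ, ⌊m⌋₊ + 1 ≤ n →
      (zipfMeasure β n).real {i | ⌊m⌋₊ + 1 ≤ i} ≤ C * m ^ (1 - β) := by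
  filter_upwards [eventually_ge_atTop 2,
    (tendsto_one_sub_inv_rpow_div_one_sub_rpow hβ).eventually_le_const hC] with m hm2 hmC n hn
  have hm0 : 0 < m := by linarith
  have hfloor1 : 1 ≤ ⌊m⌋₊ := Nat.le_floor (by push_cast; linarith)
  have hfloor : m - 1 < ⌊m⌋₊ := Nat.sub_one_lt_floor m
  have hmn : m ≤ (n : ℝ) + 1 := by
    have : ((⌊m⌋₊ + 1 : ℕ) : ℝ) ≤ n := by exact_mod_cast hn
    push_cast at this
    linarith [Nat.floor_le hm0.le]
  have hden : 0 < 1 - m ^ (1 - β) :=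
    sub_pos.2 (rpow_lt_one_of_one_lt_of_neg (by linarith) (by linarith))
  calc (zipfMeasure β n).real {i | ⌊m⌋₊ + 1 ≤ i}
      ≤ (((⌊m⌋₊ + 1 : ℕ) : ℝ) - 1) ^ (1 - β) / (1 - ((n : ℝ) + 1) ^ (1 - β)) :=
        zipfMeasure_real_setOf_le_le hβ (by omega) hn
    _ ≤ (m - 1) ^ (1 - β) / (1 - m ^ (1 - β)) := by
        push_cast
        rw [add_sub_cancel_right]
        exact div_le_div₀ (rpow_nonneg (by linarith) _)
          (rpow_le_rpow_of_nonpos (by linarith) hfloor.le (by linarith)) hden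
          (sub_le_sub_left (rpow_le_rpow_of_nonpos hm0 hmn (by linarith)) 1)
    _ = m ^ (1 - β) * ((1 - m⁻¹) ^ (1 - β) / (1 - m ^ (1 - β))) := by
        have hinv : 0 ≤ 1 - m⁻¹ := sub_nonneg.2 (inv_le_one_of_one_le₀ (by linarith))
        rw [← mul_div_assoc, ← mul_rpow hm0.le hinv, mul_one_sub, mul_inv_cancel₀ hm0.ne']
    _ ≤ m ^ (1 - β) * C := by gcongr
    _ = C * m ^ (1 - β) := mul_comm _ _

theorem eventually_measure_pi_zipf_card_filter_gt_le {β : ℝ} (hβ : 1 < β) :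
    ∀ᶠ m : ℝ in atTop, ∀ n N : ℕ, ⌊m⌋₊ + 1 ≤ n → (N : ℝ) ≤ m ^ β →
      Measure.pi (fun _ : Fin N => zipfMeasure β n)
          {x | 2 / 0.9 * m < (#{t | ⌊m⌋₊ + 1 ≤ x t} : ℝ)} ≤
        ENNReal.ofReal (exp (-(1 / 10 * m))) := by
  filter_upwards [eventually_zipfMeasure_real_tail_le_mul_rpow hβ (C := 3 / 2) (by norm_num),
    eventually_ge_atTop 1] with m htail hm n N hn hN
  have := isProbabilityMeasure_zipfMeasure β (n := n) (by omega)
  have hm0 : 0 < m := by linarith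
  have hNq : N * (zipfMeasure β n).real {i | ⌊m⌋₊ + 1 ≤ i} ≤ 3 / 2 * m :=
    calc N * (zipfMeasure β n).real {i | ⌊m⌋₊ + 1 ≤ i} ≤ m ^ β * (3 / 2 * m ^ (1 - β)) :=
          mul_le_mul hN (htail n hn) measureReal_nonneg (by positivity)
      _ = 3 / 2 * m := by
          rw [mul_left_comm, ← rpow_add hm0, add_sub_cancel, rpow_one]
  -- With `θ = 1/2` the Chernoff exponent is at most `(3/2)(e^{1/2} - 1) m - (10/9) m < -m/10`.
  have hexp : exp (1 / 2) - 1 < 0.65 := by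
    have h : exp (1 / 2) * exp (1 / 2) < 2.7182818286 := by
      rw [← exp_add, add_halves]; exact exp_one_lt_d9
    nlinarith [exp_pos (1 / 2)]
  have hch := measure_pi_card_filter_ge_le_exp (ι := Fin N) (zipfMeasure β n)
    (P := fun i => ⌊m⌋₊ + 1 ≤ i) .of_discrete (θ := 1 / 2) (by norm_num) (2 / 0.9 * m)
  rw [Fintype.card_fin] at hch
  have hsub : {x : Fin N → ℕ | 2 / 0.9 * m < (#{t | ⌊m⌋₊ + 1 ≤ x t} : ℝ)} ⊆
      {x | 2 / 0.9 * m ≤ (#{t | ⌊m⌋₊ + 1 ≤ x t} : ℝ)} :=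
    fun _ hx => Set.mem_ofPred.2 (le_of_lt hx)
  refine (measure_mono hsub).trans (hch.trans (ENNReal.ofReal_le_ofReal (exp_le_exp.2 ?_)))
  have := mul_le_mul hNq hexp.le (sub_nonneg.2 (one_le_exp (by norm_num))) (by positivity)
  norm_num at this ⊢
  linarith

lemma tendsto_div_log_log_rpow_atTop (r : ℝ) :
    Tendsto (fun x : ℝ => x / log (log x) ^ r) atTop atTop := by
  have hlog2 : Tendsto (fun x : ℝ => log (log x)) atTop atTop :=
    tendsto_log_atTop.comp tendsto_log_atTop
  have ho : (fun x : ℝ => log (log x) ^ r) =o[atTop] id := by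
    have h := (isLittleO_log_rpow_rpow_atTop r one_pos).comp_tendsto tendsto_log_atTop
    simp only [Function.comp_def, rpow_one] at h
    exact h.trans isLittleO_log_id_atTop
  have hpos : ∀ᶠ x in atTop, 0 < log (log x) ^ r / id x := by
    filter_upwards [hlog2.eventually_gt_atTop 0, eventually_gt_atTop 0] with x hx hx0
    exact div_pos (rpow_pos_of_pos hx r) hx0
  simpa [Pi.inv_def] using
    (tendsto_nhdsWithin_iff.2 ⟨ho.tendsto_div_nhds_zero, hpos⟩).inv_tendsto_nhdsGT_zero

/-- Lemma 4 of the paper (event `E₁`): for `β > 1` there are `c > 0`, `K`, `N₀` such that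
for `k ≥ K`, `n ≥ N₀` with `ℓ = ⌊k/(log log k)^{1/β}⌋ + 1 ≤ n`, in
`N = ⌊k^β/log log k⌋` i.i.d. Zipf(β, n) requests (the `N`-fold product measure), the
probability that more than `(2/0.9)·k/(log log k)^{1/β}` of the requests are for the
unpopular contents `{ℓ, …, n}` is at most `exp(−c·k/(log log k)^{1/β})`. -/
theorem zipf_unpopular_requests_chernoff (β : ℝ) (hβ : 1 < β) :
    ∃ c : ℝ, 0 < c ∧ ∃ K N₀ : ℕ, ∀ k n : ℕ, K ≤ k → N₀ ≤ n →
      let ℓ : ℕ := ⌊(k : ℝ) / (Real.log (Real.log k)) ^ (1 / β)⌋₊ + 1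
      let N : ℕ := ⌊(k : ℝ) ^ β / Real.log (Real.log k)⌋₊
      ℓ ≤ n →
        Measure.pi (fun _ : Fin N => zipfMeasure β n)
            {x | (2 / 0.9) * (k : ℝ) / (Real.log (Real.log k)) ^ (1 / β) <
              ((Finset.univ.filter fun t : Fin N => ℓ ≤ x t).card : ℝ)} ≤
          ENNReal.ofReal
            (Real.exp (-(c * (k : ℝ) / (Real.log (Real.log k)) ^ (1 / β)))) := by
  have hβ0 : 0 < β := by linarith
  have hm : Tendsto (fun k : ℕ => (k : ℝ) / log (log k) ^ (1 / β)) atTop atTop :=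
    (tendsto_div_log_log_rpow_atTop (1 / β)).comp tendsto_natCast_atTop_atTop
  have hL : ∀ᶠ k : ℕ in atTop, 0 ≤ log (log (k : ℝ)) :=
    ((tendsto_log_atTop.comp tendsto_log_atTop).comp
      tendsto_natCast_atTop_atTop).eventually_ge_atTop 0
  obtain ⟨K, hK⟩ := eventually_atTop.1
    ((hm.eventually (eventually_measure_pi_zipf_card_filter_gt_le hβ)).and hL)
  refine ⟨1 / 10, by norm_num, K, 0, fun k n hk _ => ?_⟩
  obtain ⟨hbound, hLk⟩ := hK k hk
  intro ℓ N hℓn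
  have hN : (N : ℝ) ≤ ((k : ℝ) / log (log k) ^ (1 / β)) ^ β := by
    rw [div_rpow (Nat.cast_nonneg k) (rpow_nonneg hLk _), one_div, rpow_inv_rpow hLk hβ0.ne']
    exact Nat.floor_le (by positivity)
  rw [mul_div_assoc, mul_div_assoc]
  exact hbound n N hℓn hN
end

section
/- Model an LRU cache of capacity k as a duplicate-free list of contents ordered from most recently to least recently requested: on a request r, if r is in the list it is moved to the front; otherwise r is prepended and, if the list then has more than k elements, the last element is removed. Let r_1, …, r_T be any request sequence with T ≥ W ≥ 1, and let D be the set of distinct contents appearing among the last W requests r_{T−W+1}, …, r_T. If |D| ≤ k, then after processing r_1, …, r_T (starting from any duplicate-free initial list of length at most k), every element of D is stored in the cache. -/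
/-! A request `a` moves `a` to the front and shifts every other cached item back by at most one
position, and by none if `a` was already ahead of it. Hence, as long as the `d` distinct contents
of a request sequence number at most `k`, they all sit among the first `d` slots of the cache
once the sequence has been processed, whatever the cache held before. Applied to the last `W`
requests this is the theorem. -/

/-- One step of the LRU policy on a cache of capacity `k`, modeled as a duplicate-free
list ordered from most recently to least recently requested: the request `r` is moved
(or inserted) to the front, and if the list then exceeds length `k`, the last (least
recently used) element is dropped. -/
def lruStep (k : ℕ) (l : List ℕ) (r : ℕ) : List ℕ :=
  ((r :: l.erase r).take k)

theorem List.mem_take_length_erase_take {α : Type*} [DecidableEq α] {l : List α} {a x : α}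
    {n : ℕ} (hx : x ∈ l.take n) (hxa : x ≠ a) :
    x ∈ (l.erase a).take ((l.take n).erase a).length := by
  rw [← List.prefix_iff_eq_take.mp ((List.take_prefix n l).erase a)]
  exact (List.mem_erase_of_ne hxa).mpr hx

theorem mem_take_foldl_lruStep {k : ℕ} (l : List ℕ) (s : List ℕ) (hs : s.toFinset.card ≤ k)
    {x : ℕ} (hx : x ∈ s) : x ∈ (s.foldl (lruStep k) l).take s.toFinset.card := by
  induction s using List.reverseRecOn generalizing x with
  | nil => simp at hx
  | append_singleton t a ih =>
    have hcard : (t ++ [a]).toFinset = insert a t.toFinset := by ext; simp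
    rw [hcard] at hs ⊢
    have ht : t.toFinset.card ≤ k := (Finset.card_le_card (Finset.subset_insert _ _)).trans hs
    obtain ⟨c, hc⟩ : ∃ c, (insert a t.toFinset).card = c + 1 :=
      Nat.exists_eq_add_one.mpr (Finset.card_pos.mpr (Finset.insert_nonempty _ _))
    rw [List.foldl_append, List.foldl_cons, List.foldl_nil, lruStep, List.take_take,
      min_eq_left hs, hc, List.take_succ_cons]
    rcases eq_or_ne x a with rfl | hxa
    · exact List.mem_cons_self
    have hxt : x ∈ t := by simpa [hxa] using hx
    refine List.mem_cons_of_mem _ ((List.take_prefix_take_left ?_).subset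
      (List.mem_take_length_erase_take (ih ht hxt) hxa))
    rw [List.length_erase, List.length_take]
    by_cases hat : a ∈ t
    · rw [if_pos (ih ht hat)]
      rw [Finset.insert_eq_of_mem (List.mem_toFinset.mpr hat)] at hc
      omega
    · rw [Finset.card_insert_of_notMem (by simpa using hat)] at hc
      split_ifs <;> omega

theorem lru_contains_recent_general (k W : ℕ) (init : List ℕ) (reqs : List ℕ)
    (hD : ((reqs.drop (reqs.length - W)).toFinset).card ≤ k) :
    ∀ x ∈ (reqs.drop (reqs.length - W)).toFinset,
      x ∈ reqs.foldl (lruStep k) init := by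
  intro x hx
  rw [← List.take_append_drop (reqs.length - W) reqs, List.foldl_append]
  exact List.take_subset _ _ (mem_take_foldl_lruStep _ _ hD (List.mem_toFinset.mp hx))

/-- Deterministic LRU property (key step in Theorem 4 / Lemma 6 of the paper): if the
set `D` of distinct contents appearing among the last `W` requests (`1 ≤ W ≤ T`) has at
most `k` elements, then after processing the whole request sequence (from any
duplicate-free initial cache of length at most `k`) every element of `D` is in the
cache. -/
theorem lru_contains_recent (k W : ℕ) (hW : 1 ≤ W)
    (init : List ℕ) (hnd : init.Nodup) (hlen : init.length ≤ k)
    (reqs : List ℕ) (hT : W ≤ reqs.length)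
    (hD : ((reqs.drop (reqs.length - W)).toFinset).card ≤ k) :
    ∀ x ∈ (reqs.drop (reqs.length - W)).toFinset,
      x ∈ reqs.foldl (lruStep k) init :=
  lru_contains_recent_general k W init reqs hD
end

section
/- Let n ∈ ℕ and let p : {1,…,n} → ℝ be nonnegative and nonincreasing. Let (Ω, P) be a probability space, let L : Ω → ℕ be an integrable random variable, and let m, k ≥ 1. Then E[ Σ_{i = m(k+L)+1}^{n} p_i ] ≥ Σ_{i = m(k + ⌈E[L]⌉) + 1}^{n} p_i, where the inner sum is taken to be 0 when its lower limit exceeds n. -/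
open MeasureTheory

/-!
Write `T a = ∑_{i=a+1}^n p i`. Since `p` is nonnegative and nonincreasing, the increments
`T (a + 1) - T a = -p (a + 1)` (zero beyond `n`) are nondecreasing, so `T` is a convex
nonincreasing sequence, and so is `ℓ ↦ T (m (k + ℓ))`. A convex sequence lies above its
supporting line at `c = ⌈E L⌉`, whose slope is `≤ 0`; taking expectations gives Jensen's
inequality `E[T (m (k + L))] ≥ T (m (k + c)) + slope · (E L - c) ≥ T (m (k + c))`.
-/

section DiscreteConvexity

variable {f : ℕ → ℝ}

lemma sub_eq_sum_range_increment (f : ℕ → ℝ) (a t : ℕ) :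
    f (a + t) - f a = ∑ i ∈ Finset.range t, (f (a + i + 1) - f (a + i)) :=
  (Finset.sum_range_sub (fun i => f (a + i)) t).symm

lemma add_increment_mul_sub_le (hf : Monotone fun ℓ => f (ℓ + 1) - f ℓ) (c ℓ : ℕ) :
    f c + (f (c + 1) - f c) * ((ℓ : ℝ) - c) ≤ f ℓ := by
  rcases le_total c ℓ with hcℓ | hℓc
  · obtain ⟨t, rfl⟩ := Nat.exists_eq_add_of_le hcℓ
    have : t • (f (c + 1) - f c) ≤ f (c + t) - f c := by
      rw [sub_eq_sum_range_increment f c t]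
      simpa using Finset.card_nsmul_le_sum (Finset.range t) _ _ fun i _ => hf (Nat.le_add_right c i)
    rw [nsmul_eq_mul] at this
    push_cast
    linarith
  · obtain ⟨t, rfl⟩ := Nat.exists_eq_add_of_le hℓc
    have : f (ℓ + t) - f ℓ ≤ t • (f (ℓ + t + 1) - f (ℓ + t)) := by
      rw [sub_eq_sum_range_increment f ℓ t]
      simpa using Finset.sum_le_card_nsmul (Finset.range t) _ _ fun i hi =>
        hf (Nat.add_le_add_left (Finset.mem_range.mp hi).le ℓ)
    rw [nsmul_eq_mul] at this
    push_cast
    linarith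

lemma monotone_increment_comp_mul (hf : Monotone fun ℓ => f (ℓ + 1) - f ℓ) (m : ℕ) :
    Monotone fun ℓ => f (m * (ℓ + 1)) - f (m * ℓ) := by
  intro ℓ ℓ' h
  simp only [mul_add, mul_one]
  rw [sub_eq_sum_range_increment f (m * ℓ), sub_eq_sum_range_increment f (m * ℓ')]
  exact Finset.sum_le_sum fun i _ => hf (by gcongr)

variable {Ω : Type*} [MeasurableSpace Ω] {P : Measure Ω} [IsProbabilityMeasure P]

theorem le_integral_comp_of_monotone_increment (hf : Monotone fun ℓ => f (ℓ + 1) - f ℓ)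
    (hf_anti : Antitone f) {L : Ω → ℕ} (hfL : Integrable (fun ω => f (L ω)) P)
    (hL : Integrable (fun ω => (L ω : ℝ)) P) {c : ℕ} (hc : ∫ ω, (L ω : ℝ) ∂P ≤ c) :
    f c ≤ ∫ ω, f (L ω) ∂P := by
  set s := f (c + 1) - f c
  have hs : s ≤ 0 := sub_nonpos.mpr (hf_anti (Nat.le_succ c))
  have h_dev : Integrable (fun ω => s * ((L ω : ℝ) - c)) P :=
    (hL.sub (integrable_const _)).const_mul s
  calc f c ≤ f c + s * (∫ ω, (L ω : ℝ) ∂P - c) := by nlinarith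
    _ = ∫ ω, (f c + s * ((L ω : ℝ) - c)) ∂P := by
      rw [integral_add (integrable_const _) h_dev, integral_const_mul,
        integral_sub hL (integrable_const _)]
      simp
    _ ≤ ∫ ω, f (L ω) ∂P :=
      integral_mono ((integrable_const _).add h_dev) hfL fun _ => add_increment_mul_sub_le hf c _

end DiscreteConvexity

section TailSum

def tailSum (n : ℕ) (p : ℕ → ℝ) (a : ℕ) : ℝ :=
  ∑ i ∈ Finset.Icc (a + 1) n, p i

variable {n : ℕ} {p : ℕ → ℝ}

lemma abs_tailSum_le (a : ℕ) : |tailSum n p a| ≤ ∑ i ∈ Finset.Icc 1 n, |p i| :=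
  (Finset.abs_sum_le_sum_abs _ _).trans <|
    Finset.sum_le_sum_of_subset_of_nonneg (Finset.Icc_subset_Icc_left (by omega))
      fun _ _ _ => abs_nonneg _

lemma antitone_tailSum (hnn : ∀ i ∈ Finset.Icc 1 n, 0 ≤ p i) : Antitone (tailSum n p) :=
  fun _ _ hab => Finset.sum_le_sum_of_subset_of_nonneg (Finset.Icc_subset_Icc_left (by omega))
    fun i hi _ => hnn i (Finset.Icc_subset_Icc_left (by omega) hi)

lemma tailSum_succ_sub (a : ℕ) :
    tailSum n p (a + 1) - tailSum n p a = -if a + 1 ≤ n then p (a + 1) else 0 := by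
  unfold tailSum
  split_ifs with h
  · rw [← Finset.add_sum_Ioc_eq_sum_Icc h, Finset.Icc_add_one_left_eq_Ioc]
    ring
  · simp [Finset.Icc_eq_empty (show ¬a + 1 + 1 ≤ n by omega),
      Finset.Icc_eq_empty (show ¬a + 1 ≤ n by omega)]

lemma monotone_tailSum_increment (hnn : ∀ i ∈ Finset.Icc 1 n, 0 ≤ p i)
    (hmono : ∀ i j : ℕ, 1 ≤ i → i ≤ j → j ≤ n → p j ≤ p i) :
    Monotone fun a => tailSum n p (a + 1) - tailSum n p a := by
  intro a b hab
  simp only [tailSum_succ_sub, neg_le_neg_iff]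
  split_ifs with hb ha ha
  · exact hmono _ _ (by omega) (by omega) hb
  · omega
  · exact hnn _ (Finset.mem_Icc.mpr ⟨by omega, ha⟩)
  · rfl

end TailSum

theorem jensen_tail_sum_general (n m k : ℕ)
    (p : ℕ → ℝ)
    (hnn : ∀ i ∈ Finset.Icc 1 n, 0 ≤ p i)
    (hmono : ∀ i j : ℕ, 1 ≤ i → i ≤ j → j ≤ n → p j ≤ p i)
    {Ω : Type*} [MeasurableSpace Ω] (P : Measure Ω) [IsProbabilityMeasure P]
    (L : Ω → ℕ) (hL : Measurable L)
    (hLint : Integrable (fun ω => (L ω : ℝ)) P) :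
    ∑ i ∈ Finset.Icc (m * (k + ⌈∫ ω, (L ω : ℝ) ∂P⌉₊) + 1) n, p i ≤
      ∫ ω, (∑ i ∈ Finset.Icc (m * (k + L ω) + 1) n, p i) ∂P := by
  set f : ℕ → ℝ := fun ℓ => tailSum n p (m * (k + ℓ))
  have hf_convex : Monotone fun ℓ => f (ℓ + 1) - f ℓ :=
    (monotone_increment_comp_mul (monotone_tailSum_increment hnn hmono) m).comp
      (monotone_id.const_add k)
  have hf_anti : Antitone f :=
    (antitone_tailSum hnn).comp_monotone ((monotone_id.const_add k).const_mul' m)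
  have hfL : Integrable (fun ω => f (L ω)) P :=
    .of_bound ((measurable_from_top : Measurable f).comp hL).aestronglyMeasurable _
      (ae_of_all _ fun _ => abs_tailSum_le _)
  exact le_integral_comp_of_monotone_increment hf_convex hf_anti hfL hLint (Nat.le_ceil _)

/-- Jensen-type step in Lemma 8 of the paper: for nonnegative nonincreasing `p` on
`{1,…,n}`, an integrable `ℕ`-valued random variable `L` and `m, k ≥ 1`,
`E[∑_{i=m(k+L)+1}^n p i] ≥ ∑_{i=m(k+⌈E[L]⌉)+1}^n p i` (the inner sum being `0` when its
lower limit exceeds `n`). -/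
theorem jensen_tail_sum (n m k : ℕ) (hm : 1 ≤ m) (hk : 1 ≤ k)
    (p : ℕ → ℝ)
    (hnn : ∀ i ∈ Finset.Icc 1 n, 0 ≤ p i)
    (hmono : ∀ i j : ℕ, 1 ≤ i → i ≤ j → j ≤ n → p j ≤ p i)
    {Ω : Type*} [MeasurableSpace Ω] (P : Measure Ω) [IsProbabilityMeasure P]
    (L : Ω → ℕ) (hL : Measurable L)
    (hLint : Integrable (fun ω => (L ω : ℝ)) P) :
    ∑ i ∈ Finset.Icc (m * (k + ⌈∫ ω, (L ω : ℝ) ∂P⌉₊) + 1) n, p i ≤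
      ∫ ω, (∑ i ∈ Finset.Icc (m * (k + L ω) + 1) n, p i) ∂P :=
  jensen_tail_sum_general n m k p hnn hmono P L hL hLint
end
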